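/- arXiv:1306.5173 — 4 statements merged into one kernel-verified Lean document; each statement's English description precedes it below -/
import Mathlib

section
/- Let H be an m×2n matrix over 𝔽₂ and let H' be the m'×2n matrix formed from rows j₁ < j₂ < … < j_{m'} of H, such that Row(H') = Row(H) and H' has full row rank m'. Let R be an m×m' matrix over 𝔽₂ with H = R H'. For s = (s₁,…,s_m) ∈ 𝔽₂^m, put s' = (s_{j₁},…,s_{j_{m'}}) ∈ 𝔽₂^{m'}, and let t ≥ 0 be an integer. Then there exists e ∈ 𝔽₂^{2n} with gw(e) ≤ t and e Λ Hᵀ = s if and only if both s' Rᵀ = s and there exists e ∈ 𝔽₂^{2n} with gw(e) ≤ t and e Λ H'ᵀ = s'. -/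
open Matrix

/-- The `2n × 2n` symplectic form matrix `Λ = [[O,I],[I,O]]` over `𝔽₂`. -/
def Lam (n : ℕ) : Matrix (Fin n ⊕ Fin n) (Fin n ⊕ Fin n) (ZMod 2) :=
  Matrix.fromBlocks 0 1 1 0

/-- The syndrome `e Λ Hᵀ ∈ 𝔽₂^m` of `e ∈ 𝔽₂^{2n}` with respect to `H`. -/
def syndrome {m n : ℕ} (H : Matrix (Fin m) (Fin n ⊕ Fin n) (ZMod 2))
    (e : Fin n ⊕ Fin n → ZMod 2) : Fin m → ZMod 2 :=
  Matrix.vecMul (Matrix.vecMul e (Lam n)) Hᵀ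

/-- Generalized weight of `(x|z)`: `w_H(x) + w_H(z) − w_H(x∧z)`. -/
def gw {n : ℕ} (x z : Fin n → ZMod 2) : ℕ :=
  hammingNorm x + hammingNorm z - hammingNorm (x * z)

/-- Generalized weight of a full vector `e = (x|z) ∈ 𝔽₂^{2n}`. -/
def gwFull {n : ℕ} (e : Fin n ⊕ Fin n → ZMod 2) : ℕ :=
  gw (fun j => e (Sum.inl j)) (fun j => e (Sum.inr j))

lemma syndrome_eq {m n : ℕ} (H : Matrix (Fin m) (Fin n ⊕ Fin n) (ZMod 2))
    (e : Fin n ⊕ Fin n → ZMod 2) :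
    syndrome H e = H *ᵥ (Matrix.vecMul e (Lam n)) := by
  simp [syndrome, Matrix.vecMul_transpose]

/-- correctness of the reduction from CGW_Z to CGW_ZF:
let `H'` consist of rows `j₁ < ⋯ < j_{m'}` of `H` such that `Row(H') = Row(H)` and
`H'` has full row rank, let `R` satisfy `H = R H'`, and let `s' = (s_{j₁},…,s_{j_{m'}})`.
Then there exists `e` with `gw(e) ≤ t` and `e Λ Hᵀ = s` iff both `s' Rᵀ = s` and
there exists `e` with `gw(e) ≤ t` and `e Λ H'ᵀ = s'`. -/
theorem cgwZ_reduces_to_cgwZF {m m' n : ℕ}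
    (H : Matrix (Fin m) (Fin n ⊕ Fin n) (ZMod 2))
    (j : Fin m' → Fin m) (hj : StrictMono j)
    (H' : Matrix (Fin m') (Fin n ⊕ Fin n) (ZMod 2))
    (hH' : H' = H.submatrix j id)
    (hrow : (Set.range fun c : Fin m' → ZMod 2 => Matrix.vecMul c H') =
            (Set.range fun c : Fin m → ZMod 2 => Matrix.vecMul c H))
    (hfull : LinearIndependent (ZMod 2) (fun i : Fin m' => H' i))
    (R : Matrix (Fin m) (Fin m') (ZMod 2)) (hR : H = R * H')
    (s : Fin m → ZMod 2) (s' : Fin m' → ZMod 2) (hs' : s' = s ∘ j)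
    (t : ℕ) :
    (∃ e : Fin n ⊕ Fin n → ZMod 2, gwFull e ≤ t ∧ syndrome H e = s) ↔
      (Matrix.vecMul s' Rᵀ = s ∧
        ∃ e : Fin n ⊕ Fin n → ZMod 2, gwFull e ≤ t ∧ syndrome H' e = s') := by
  constructor
  · rintro ⟨e, hw, he⟩
    have hs : syndrome H' e = s' := by
      subst hH' hs'
      rw [syndrome_eq] at he ⊢
      funext i
      simp [Matrix.mulVec, Matrix.submatrix, ← he]
    refine ⟨?_, e, hw, hs⟩
    rw [Matrix.vecMul_transpose, ← hs, syndrome_eq, Matrix.mulVec_mulVec, ← hR,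
      ← syndrome_eq, he]
  · rintro ⟨hsR, e, hw, he⟩
    refine ⟨e, hw, ?_⟩
    rw [syndrome_eq, hR, ← Matrix.mulVec_mulVec, ← syndrome_eq, he,
      ← Matrix.vecMul_transpose, hsR]
end

section
/- Let H = [O | H_Z] be an m×2n matrix over 𝔽₂ whose first n columns are zero, let s ∈ 𝔽₂^m and let t ≥ 0 be an integer. Then there exists e ∈ 𝔽₂^{2n} with gw(e) ≤ t and e Λ Hᵀ = s if and only if there exists x ∈ 𝔽₂^n with w_H(x) ≤ t and x H_Zᵀ = s. -/
open Matrix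

lemma syndrome_eq_s7 {m n : ℕ}
    (H : Matrix (Fin m) (Fin n ⊕ Fin n) (ZMod 2))
    (HZ : Matrix (Fin m) (Fin n) (ZMod 2))
    (hO : ∀ i j, H i (Sum.inl j) = 0)
    (hZ : ∀ i j, H i (Sum.inr j) = HZ i j)
    (e : Fin n ⊕ Fin n → ZMod 2) :
    syndrome H e = Matrix.vecMul (fun j => e (Sum.inl j)) HZᵀ := by
  funext i
  simp only [syndrome, Matrix.vecMul, dotProduct, Matrix.transpose_apply,
    Fintype.sum_sum_type, Lam, Matrix.fromBlocks_apply₁₁, Matrix.fromBlocks_apply₁₂,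
    Matrix.fromBlocks_apply₂₁, Matrix.fromBlocks_apply₂₂, Matrix.zero_apply,
    Matrix.one_apply, hO, hZ, mul_zero, zero_mul, Finset.sum_const_zero, add_zero, zero_add]
  congr 1
  funext j
  congr 1
  simp [Finset.sum_ite_eq', Finset.mul_sum, mul_ite]

lemma hammingNorm_le_gw {n : ℕ} (x z : Fin n → ZMod 2) : hammingNorm x ≤ gw x z := by
  have h : hammingNorm (x * z) ≤ hammingNorm z := by
    apply Finset.card_le_card
    intro j hj
    simp only [hammingNorm, Finset.mem_filter, Finset.mem_univ, true_and, Pi.mul_apply] at *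
    exact fun hz => hj (by simp [hz])
  unfold gw
  omega

/-- for `H = [O | H_Z]` (first `n` columns zero), there exists
`e ∈ 𝔽₂^{2n}` with `gw(e) ≤ t` and `e Λ Hᵀ = s` iff there exists `x ∈ 𝔽₂^n`
with `w_H(x) ≤ t` and `x H_Zᵀ = s`. -/
theorem cgwZ_iff_classical {m n : ℕ}
    (H : Matrix (Fin m) (Fin n ⊕ Fin n) (ZMod 2))
    (HZ : Matrix (Fin m) (Fin n) (ZMod 2))
    (hO : ∀ i j, H i (Sum.inl j) = 0)
    (hZ : ∀ i j, H i (Sum.inr j) = HZ i j)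
    (s : Fin m → ZMod 2) (t : ℕ) :
    (∃ e : Fin n ⊕ Fin n → ZMod 2, gwFull e ≤ t ∧ syndrome H e = s) ↔
      (∃ x : Fin n → ZMod 2, hammingNorm x ≤ t ∧ Matrix.vecMul x HZᵀ = s) := by
  constructor
  · rintro ⟨e, hgw, hs⟩
    refine ⟨fun j => e (Sum.inl j), le_trans (hammingNorm_le_gw _ _) hgw, ?_⟩
    rw [← syndrome_eq_s7 H HZ hO hZ e]; exact hs
  · rintro ⟨x, hx, hs⟩
    refine ⟨Sum.elim x 0, ?_, ?_⟩
    · have h0 : (fun j => Sum.elim x (0 : Fin n → ZMod 2) (Sum.inr j)) = (0 : Fin n → ZMod 2) := rfl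
      simp only [gwFull, gw, h0, Sum.elim_inl, mul_zero, Pi.mul_apply, Pi.zero_apply]
      simpa [hammingNorm] using hx
    · rw [syndrome_eq_s7 H HZ hO hZ]
      simpa using hs
end

section
/- Let H be an m×2n matrix over 𝔽₂ of full row rank m with H Λ Hᵀ = O, let s ∈ 𝔽₂^m, and let ε be a real number with 0 < ε ≤ 3/4 and (ε/3)/(1−ε) < 2^{−m}. For v ∈ 𝔽₂^{2n}, set α_v = ∑_{u ∈ v + Row(H)} (ε/3)^{gw(u)} (1−ε)^{n−gw(u)}. If v satisfies v Λ Hᵀ = s and maximizes α_v among all w ∈ 𝔽₂^{2n} with w Λ Hᵀ = s, then the coset v + Row(H) contains an element of globally minimal generalized weight among all solutions: min_{u ∈ v + Row(H)} gw(u) = min{gw(e) : e ∈ 𝔽₂^{2n}, e Λ Hᵀ = s}. -/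
open Matrix Finset

/-- The coset `v + Row(H)` of the row space of `H`, as a finite set. -/
def cosetF {m n : ℕ} (H : Matrix (Fin m) (Fin n ⊕ Fin n) (ZMod 2))
    (v : Fin n ⊕ Fin n → ZMod 2) : Finset (Fin n ⊕ Fin n → ZMod 2) :=
  Finset.image (fun c : Fin m → ZMod 2 => v + Matrix.vecMul c H) Finset.univ

/-- The coset probability `α_v = ∑_{u ∈ v + Row(H)} (ε/3)^{gw(u)} (1−ε)^{n−gw(u)}`. -/
noncomputable def alpha {m n : ℕ} (H : Matrix (Fin m) (Fin n ⊕ Fin n) (ZMod 2))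
    (ε : ℝ) (v : Fin n ⊕ Fin n → ZMod 2) : ℝ :=
  ∑ u ∈ cosetF H v, (ε / 3) ^ gwFull u * (1 - ε) ^ (n - gwFull u)

/- ### Auxiliary lemmas -/

lemma gwFull_le_n {n : ℕ} (e : Fin n ⊕ Fin n → ZMod 2) : gwFull e ≤ n := by
  unfold gwFull gw hammingNorm
  set x : Fin n → ZMod 2 := fun j => e (Sum.inl j)
  set z : Fin n → ZMod 2 := fun j => e (Sum.inr j)
  have hC : (Finset.univ.filter fun i => (x * z) i ≠ 0)
      = (Finset.univ.filter fun i => x i ≠ 0) ∩ (Finset.univ.filter fun i => z i ≠ 0) := by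
    ext i
    simp [Pi.mul_apply, mul_ne_zero_iff, and_assoc]
  rw [hC]
  have h1 := Finset.card_union_add_card_inter
    (Finset.univ.filter fun i => x i ≠ 0) (Finset.univ.filter fun i => z i ≠ 0)
  have h2 : ((Finset.univ.filter fun i => x i ≠ 0) ∪ (Finset.univ.filter fun i => z i ≠ 0)).card
      ≤ n := by
    simpa using Finset.card_le_univ
      ((Finset.univ.filter fun i => x i ≠ 0) ∪ (Finset.univ.filter fun i => z i ≠ 0))
  omega

lemma syndrome_mem_cosetF {m n : ℕ} {H : Matrix (Fin m) (Fin n ⊕ Fin n) (ZMod 2)}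
    (hself : H * Lam n * Hᵀ = 0) {v u : Fin n ⊕ Fin n → ZMod 2}
    (hu : u ∈ cosetF H v) : syndrome H u = syndrome H v := by
  rcases Finset.mem_image.mp hu with ⟨c, -, rfl⟩
  unfold syndrome
  rw [Matrix.add_vecMul, Matrix.add_vecMul]
  have h0 : Matrix.vecMul (Matrix.vecMul (Matrix.vecMul c H) (Lam n)) Hᵀ = 0 := by
    rw [Matrix.vecMul_vecMul, Matrix.vecMul_vecMul, ← Matrix.mul_assoc, hself, Matrix.vecMul_zero]
  rw [h0, add_zero]

lemma mem_cosetF_self {m n : ℕ} (H : Matrix (Fin m) (Fin n ⊕ Fin n) (ZMod 2))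
    (v : Fin n ⊕ Fin n → ZMod 2) : v ∈ cosetF H v := by
  refine Finset.mem_image.mpr ⟨0, Finset.mem_univ _, ?_⟩
  rw [Matrix.zero_vecMul, add_zero]

lemma card_cosetF_le {m n : ℕ} (H : Matrix (Fin m) (Fin n ⊕ Fin n) (ZMod 2))
    (v : Fin n ⊕ Fin n → ZMod 2) : (cosetF H v).card ≤ 2 ^ m := by
  have := Finset.card_image_le (s := (Finset.univ : Finset (Fin m → ZMod 2)))
    (f := fun c : Fin m → ZMod 2 => v + Matrix.vecMul c H)
  simpa [cosetF, Finset.card_univ] using this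

lemma pow_term_anti {r q : ℝ} (hr : 0 ≤ r) (hrq : r ≤ q) {n a b : ℕ}
    (hb : b ≤ a) (ha : a ≤ n) : r ^ a * q ^ (n - a) ≤ r ^ b * q ^ (n - b) := by
  have hq : 0 ≤ q := hr.trans hrq
  have h1 : r ^ a = r ^ b * r ^ (a - b) := by rw [← pow_add]; congr 1; omega
  have h2 : q ^ (n - b) = q ^ (a - b) * q ^ (n - a) := by rw [← pow_add]; congr 1; omega
  rw [h1, h2, mul_assoc]
  refine mul_le_mul_of_nonneg_left ?_ (pow_nonneg hr b)
  exact mul_le_mul_of_nonneg_right (pow_le_pow_left₀ hr hrq _) (pow_nonneg hq _)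

/-- let `H` have full row rank `m` and satisfy `H Λ Hᵀ = O`, let
`0 < ε ≤ 3/4` with `(ε/3)/(1−ε) < 2^{-m}`.  If `v` satisfies `v Λ Hᵀ = s` and
maximizes `α_v` among all solutions `w` of `w Λ Hᵀ = s`, then the coset
`v + Row(H)` contains an element of globally minimal generalized weight:
`min_{u ∈ v + Row(H)} gw(u) = min {gw(e) : e Λ Hᵀ = s}`. -/
theorem qmepd_coset_contains_min {m n : ℕ}
    (H : Matrix (Fin m) (Fin n ⊕ Fin n) (ZMod 2))
    (hfull : LinearIndependent (ZMod 2) (fun i : Fin m => H i))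
    (hself : H * Lam n * Hᵀ = 0)
    (s : Fin m → ZMod 2) (ε : ℝ)
    (hε0 : 0 < ε) (hε1 : ε ≤ 3 / 4)
    (hεm : ε / 3 / (1 - ε) < ((2 : ℝ) ^ m)⁻¹)
    (v : Fin n ⊕ Fin n → ZMod 2)
    (hv : syndrome H v = s)
    (hmax : ∀ w : Fin n ⊕ Fin n → ZMod 2, syndrome H w = s → alpha H ε w ≤ alpha H ε v) :
    sInf (gwFull '' {u | u ∈ cosetF H v}) =
      sInf (gwFull '' {e : Fin n ⊕ Fin n → ZMod 2 | syndrome H e = s}) := by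
  set r : ℝ := ε / 3 with hr_def
  set q : ℝ := 1 - ε with hq_def
  have hr : 0 < r := by positivity
  have hq : 0 < q := by rw [hq_def]; linarith
  have hrq : r ≤ q := by rw [hr_def, hq_def]; linarith
  have h2m : (0 : ℝ) < 2 ^ m := by positivity
  have hrm : r * 2 ^ m < q := by
    have h := (div_lt_iff₀ hq).mp hεm
    calc r * 2 ^ m < ((2 : ℝ) ^ m)⁻¹ * q * 2 ^ m := by
          exact mul_lt_mul_of_pos_right h h2m
      _ = q := by field_simp
  -- the two sets are nonempty images
  have hSsol : (gwFull '' {e : Fin n ⊕ Fin n → ZMod 2 | syndrome H e = s}).Nonempty :=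
    ⟨gwFull v, v, hv, rfl⟩
  have hScos : (gwFull '' {u | u ∈ cosetF H v}).Nonempty :=
    ⟨gwFull v, v, mem_cosetF_self H v, rfl⟩
  obtain ⟨e₀, he₀s, he₀w⟩ := Nat.sInf_mem hSsol
  obtain ⟨u₀, hu₀c, hu₀w⟩ := Nat.sInf_mem hScos
  set wstar := sInf (gwFull '' {e : Fin n ⊕ Fin n → ZMod 2 | syndrome H e = s}) with hws
  set wv := sInf (gwFull '' {u | u ∈ cosetF H v}) with hwv
  -- wstar ≤ wv
  have hu₀syn : syndrome H u₀ = s := by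
    rw [syndrome_mem_cosetF hself hu₀c, hv]
  have hle1 : wstar ≤ wv := by
    rw [← hu₀w]
    exact Nat.sInf_le ⟨u₀, hu₀syn, rfl⟩
  -- wv ≤ wstar, by contradiction
  by_contra hne
  have hlt : wstar < wv := lt_of_le_of_ne hle1 (Ne.symm hne)
  have hwvn : wv ≤ n := hu₀w ▸ gwFull_le_n u₀
  have hwsn : wstar < n := lt_of_lt_of_le hlt hwvn
  -- lower bound on alpha of e₀
  have key1 : r ^ wstar * q ^ (n - wstar) ≤ alpha H ε e₀ := by
    rw [← he₀w]
    refine Finset.single_le_sum (f := fun u => r ^ gwFull u * q ^ (n - gwFull u))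
      (fun u _ => by positivity) (mem_cosetF_self H e₀)
  -- upper bound on alpha of v
  have key2 : alpha H ε v ≤ (2 ^ m : ℝ) * (r ^ (wstar + 1) * q ^ (n - (wstar + 1))) := by
    have hterm : ∀ u ∈ cosetF H v,
        r ^ gwFull u * q ^ (n - gwFull u) ≤ r ^ (wstar + 1) * q ^ (n - (wstar + 1)) := by
      intro u hu
      have h1 : wv ≤ gwFull u := Nat.sInf_le ⟨u, hu, rfl⟩
      exact pow_term_anti hr.le hrq (by omega) (gwFull_le_n u)
    calc alpha H ε v ≤ ∑ _u ∈ cosetF H v, r ^ (wstar + 1) * q ^ (n - (wstar + 1)) :=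
          Finset.sum_le_sum hterm
      _ = ((cosetF H v).card : ℝ) * (r ^ (wstar + 1) * q ^ (n - (wstar + 1))) := by
          rw [Finset.sum_const, nsmul_eq_mul]
      _ ≤ (2 ^ m : ℝ) * (r ^ (wstar + 1) * q ^ (n - (wstar + 1))) := by
          have hc : ((cosetF H v).card : ℝ) ≤ (2 ^ m : ℝ) := by
            exact_mod_cast card_cosetF_le H v
          exact mul_le_mul_of_nonneg_right hc (by positivity)
  -- strict comparison
  have key3 : (2 ^ m : ℝ) * (r ^ (wstar + 1) * q ^ (n - (wstar + 1))) <
      r ^ wstar * q ^ (n - wstar) := by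
    have h1 : n - (wstar + 1) = n - wstar - 1 := by omega
    have h2 : q ^ (n - wstar) = q * q ^ (n - wstar - 1) := by
      rw [← pow_succ']; congr 1; omega
    have hpos : 0 < r ^ wstar * q ^ (n - wstar - 1) := by positivity
    rw [h1, h2, pow_succ]
    calc (2 ^ m : ℝ) * (r ^ wstar * r * q ^ (n - wstar - 1))
        = (r * 2 ^ m) * (r ^ wstar * q ^ (n - wstar - 1)) := by ring
      _ < q * (r ^ wstar * q ^ (n - wstar - 1)) := mul_lt_mul_of_pos_right hrm hpos
      _ = r ^ wstar * (q * q ^ (n - wstar - 1)) := by ring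
  have := hmax e₀ he₀s
  linarith
end

section
/- Let H be an m×2n matrix over 𝔽₂ with H Λ Hᵀ = O, let C = Row(H), and let C⊥ = {v ∈ 𝔽₂^{2n} : v Λ Hᵀ = 0} be its symplectic dual. Set d = min{gw(v) : v ∈ C⊥ \ C} and let t ≥ 0 be an integer with d ≥ 2t + 1. If e₁, e₂ ∈ 𝔽₂^{2n} satisfy e₁ Λ Hᵀ = e₂ Λ Hᵀ and gw(e₁) ≤ t and gw(e₂) ≤ t, then e₁ + e₂ ∈ Row(H). -/
open Matrix

lemma gw_eq_card {n : ℕ} (x z : Fin n → ZMod 2) :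
    gw x z = (Finset.univ.filter (fun j => x j ≠ 0 ∨ z j ≠ 0)).card := by
  classical
  have hx : hammingNorm x = (Finset.univ.filter (fun j => x j ≠ 0)).card := rfl
  have hz : hammingNorm z = (Finset.univ.filter (fun j => z j ≠ 0)).card := rfl
  have hxz : hammingNorm (x * z)
      = ((Finset.univ.filter (fun j => x j ≠ 0)) ∩
         (Finset.univ.filter (fun j => z j ≠ 0))).card := by
    have hset : (Finset.univ.filter (fun j => x j * z j ≠ 0))
        = ((Finset.univ.filter (fun j => x j ≠ 0)) ∩
           (Finset.univ.filter (fun j => z j ≠ 0))) := by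
      ext j
      simp only [Finset.mem_filter, Finset.mem_inter, Finset.mem_univ, true_and]
      constructor
      · intro h
        exact ⟨fun h0 => h (by simp [h0]), fun h0 => h (by simp [h0])⟩
      · rintro ⟨hx0, hz0⟩
        exact mul_ne_zero hx0 hz0
    simpa [hammingNorm, Pi.mul_apply] using congrArg Finset.card hset
  have hu : (Finset.univ.filter (fun j => x j ≠ 0 ∨ z j ≠ 0))
      = (Finset.univ.filter (fun j => x j ≠ 0)) ∪ (Finset.univ.filter (fun j => z j ≠ 0)) := by
    ext j; simp [Finset.mem_filter, Finset.mem_union]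
  rw [gw, hx, hz, hxz, hu, Finset.card_union]

lemma gwFull_add_le {n : ℕ} (a b : Fin n ⊕ Fin n → ZMod 2) :
    gwFull (a + b) ≤ gwFull a + gwFull b := by
  classical
  unfold gwFull
  rw [gw_eq_card, gw_eq_card, gw_eq_card]
  refine le_trans (le_trans (Finset.card_le_card ?_) (Finset.card_union_le _ _)) le_rfl
  intro j hj
  simp only [Finset.mem_filter, Finset.mem_univ, true_and, Finset.mem_union, Pi.add_apply] at hj ⊢
  by_contra h
  push_neg at h
  obtain ⟨⟨ha1, ha2⟩, hb1, hb2⟩ := h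
  rcases hj with h | h
  · exact h (by simp [ha1, hb1])
  · exact h (by simp [ha2, hb2])

/-- degeneracy of bounded distance decoding: let `H Λ Hᵀ = O`,
`C = Row(H)`, `C⊥ = {v : v Λ Hᵀ = 0}` and `d = min {gw(v) : v ∈ C⊥ \ C}`.
If `d ≥ 2t + 1` and `e₁, e₂` have the same syndrome and `gw(e₁), gw(e₂) ≤ t`,
then `e₁ + e₂ ∈ Row(H)`. -/
theorem bounded_distance_degeneracy {m n : ℕ}
    (H : Matrix (Fin m) (Fin n ⊕ Fin n) (ZMod 2))
    (hself : H * Lam n * Hᵀ = 0)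
    (C : Set (Fin n ⊕ Fin n → ZMod 2))
    (hC : C = Set.range fun c : Fin m → ZMod 2 => Matrix.vecMul c H)
    (Cperp : Set (Fin n ⊕ Fin n → ZMod 2))
    (hCperp : Cperp = {v | syndrome H v = 0})
    (d t : ℕ) (hd : d = sInf (gwFull '' (Cperp \ C))) (hdt : 2 * t + 1 ≤ d)
    (e₁ e₂ : Fin n ⊕ Fin n → ZMod 2)
    (hs : syndrome H e₁ = syndrome H e₂)
    (h1 : gwFull e₁ ≤ t) (h2 : gwFull e₂ ≤ t) :
    e₁ + e₂ ∈ C := by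
  by_contra hnC
  have hsyn : syndrome H (e₁ + e₂) = 0 := by
    unfold syndrome at *
    rw [Matrix.add_vecMul, Matrix.add_vecMul, hs]
    funext i
    simp [Pi.add_apply, CharTwo.add_self_eq_zero]
  have hmem : e₁ + e₂ ∈ Cperp \ C := ⟨by rw [hCperp]; exact hsyn, hnC⟩
  have hle : d ≤ gwFull (e₁ + e₂) := by
    rw [hd]
    exact Nat.sInf_le ⟨e₁ + e₂, hmem, rfl⟩
  have : gwFull (e₁ + e₂) ≤ 2 * t :=
    le_trans (gwFull_add_le e₁ e₂) (by omega)
  omega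
end
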